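/- The row sums of R satisfy R.mulVec 1 = (A + R).mulVec b (where 1 is the all-ones vector), and with r := max_i ∑_j K i j one has max_i ∑_j R i j ≤ (1 − min_j b_j) · r / (1 − r); consequently every complex eigenvalue μ of R satisfies |μ| ≤ (1 − min_j b_j) · r / (1 − r). -/

import Mathlib

/-
The whole argument is a discrete maximum principle: if `K ≥ 0` has row sums at most `r < 1` and
`(1 - K) x = y` with `y ≤ c` for some `c ≥ 0`, then at a maximal coordinate `x_m ≤ r x_m + c`, so
`x ≤ c / (1 - r)`. Applied to `-x` it shows that `1 - K` is injective with a nonnegative inverse,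
hence `S ≥ 0` and `R ≥ 0`. Applied to `w = S b = (1 - K)⁻¹ (F b)`, where `F b = K 1 ≤ r`, it gives
`w ≤ r / (1 - r)`, and the row sums of `R` are `(1 - b_i) w_i`. Finally, Gershgorin's theorem
bounds every eigenvalue of the nonnegative matrix `R` by its largest row sum.
-/

open Matrix Finset

theorem Finset.sum_mul_le_sup'_of_sum_eq_one {ι : Type*} {s : Finset ι} (hs : s.Nonempty)
    {F : ι → ℝ} (hF : ∀ j ∈ s, 0 ≤ F j) (hFsum : ∑ j ∈ s, F j = 1) (b : ι → ℝ) :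
    ∑ j ∈ s, F j * b j ≤ s.sup' hs b :=
  calc ∑ j ∈ s, F j * b j ≤ ∑ j ∈ s, F j * s.sup' hs b :=
        sum_le_sum fun j hj => mul_le_mul_of_nonneg_left (le_sup' b hj) (hF j hj)
    _ = s.sup' hs b := by rw [← sum_mul, hFsum, one_mul]

namespace Matrix

section MaximumPrinciple

variable {ι : Type*} [Fintype ι] [DecidableEq ι] {K : Matrix ι ι ℝ} {r : ℝ}

theorem apply_le_div_one_sub_of_one_sub_mulVec_eq (hK : ∀ i j, 0 ≤ K i j)
    (hrow : ∀ i, ∑ j, K i j ≤ r) (hr : r < 1) {x y : ι → ℝ} {c : ℝ} (hc : 0 ≤ c)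
    (hy : ∀ i, y i ≤ c) (hx : (1 - K) *ᵥ x = y) (i : ι) : x i ≤ c / (1 - r) := by
  have : Nonempty ι := ⟨i⟩
  obtain ⟨m, hm⟩ := Finite.exists_max x
  have hfix : x m = ∑ k, K m k * x k + y m := by
    rw [← hx, sub_mulVec, one_mulVec, Pi.sub_apply, mulVec, dotProduct]
    ring
  suffices x m * (1 - r) ≤ c from (hm i).trans ((le_div_iff₀ (sub_pos.2 hr)).2 this)
  rcases le_or_gt (x m) 0 with hm_nonpos | hm_pos
  · nlinarith
  · have hsum : ∑ k, K m k * x k ≤ r * x m :=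
      calc ∑ k, K m k * x k ≤ ∑ k, K m k * x m :=
            sum_le_sum fun k _ => mul_le_mul_of_nonneg_left (hm k) (hK m k)
        _ = (∑ k, K m k) * x m := (sum_mul ..).symm
        _ ≤ r * x m := mul_le_mul_of_nonneg_right (hrow m) hm_pos.le
    linarith [hy m]

theorem nonneg_of_one_sub_mulVec_eq (hK : ∀ i j, 0 ≤ K i j) (hrow : ∀ i, ∑ j, K i j ≤ r)
    (hr : r < 1) {x y : ι → ℝ} (hy : 0 ≤ y) (hx : (1 - K) *ᵥ x = y) : 0 ≤ x := fun i => by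
  have := apply_le_div_one_sub_of_one_sub_mulVec_eq hK hrow hr le_rfl
    (y := -y) (fun i => neg_nonpos.2 (hy i)) (by rw [mulVec_neg, hx]) i
  simpa using this

theorem isUnit_det_one_sub (hK : ∀ i j, 0 ≤ K i j) (hrow : ∀ i, ∑ j, K i j ≤ r) (hr : r < 1) :
    IsUnit (1 - K).det := by
  refine isUnit_iff_ne_zero.2 fun hdet => ?_
  obtain ⟨v, hv_ne, hv⟩ := exists_mulVec_eq_zero_iff.2 hdet
  have hv_nonneg := nonneg_of_one_sub_mulVec_eq hK hrow hr le_rfl hv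
  have hv_nonpos := nonneg_of_one_sub_mulVec_eq hK hrow hr le_rfl
    (by rw [mulVec_neg, hv, neg_zero] : (1 - K) *ᵥ -v = 0)
  exact hv_ne (le_antisymm (neg_nonneg.1 hv_nonpos) hv_nonneg)

theorem one_sub_mulVec_inv_one_sub_mulVec (hK : ∀ i j, 0 ≤ K i j)
    (hrow : ∀ i, ∑ j, K i j ≤ r) (hr : r < 1) (y : ι → ℝ) :
    (1 - K) *ᵥ ((1 - K)⁻¹ *ᵥ y) = y := by
  rw [mulVec_mulVec, mul_nonsing_inv _ (isUnit_det_one_sub hK hrow hr), one_mulVec]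

theorem inv_one_sub_apply_nonneg (hK : ∀ i j, 0 ≤ K i j) (hrow : ∀ i, ∑ j, K i j ≤ r)
    (hr : r < 1) (i j : ι) : 0 ≤ (1 - K)⁻¹ i j := by
  simpa [mulVec_single_one] using nonneg_of_one_sub_mulVec_eq hK hrow hr
    (Pi.single_nonneg.2 zero_le_one) (one_sub_mulVec_inv_one_sub_mulVec hK hrow hr _) i

theorem inv_one_sub_mulVec_apply_le (hK : ∀ i j, 0 ≤ K i j) (hrow : ∀ i, ∑ j, K i j ≤ r)
    (hr : r < 1) {y : ι → ℝ} {c : ℝ} (hc : 0 ≤ c) (hy : ∀ i, y i ≤ c) (i : ι) :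
    ((1 - K)⁻¹ *ᵥ y) i ≤ c / (1 - r) :=
  apply_le_div_one_sub_of_one_sub_mulVec_eq hK hrow hr hc hy
    (one_sub_mulVec_inv_one_sub_mulVec hK hrow hr y) i

end MaximumPrinciple

theorem exists_norm_le_sum_norm_of_mem_spectrum {ι 𝕜 : Type*} [Fintype ι] [DecidableEq ι]
    [NormedField 𝕜] {A : Matrix ι ι 𝕜} {μ : 𝕜} (hμ : μ ∈ spectrum 𝕜 A) :
    ∃ k, ‖μ‖ ≤ ∑ j, ‖A k j‖ := by
  rw [← spectrum_toLin', ← Module.End.hasEigenvalue_iff_mem_spectrum] at hμ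
  obtain ⟨k, hk⟩ := eigenvalue_mem_ball hμ
  rw [Metric.mem_closedBall, dist_eq_norm] at hk
  refine ⟨k, ?_⟩
  calc ‖μ‖ ≤ ‖A k k‖ + ‖μ - A k k‖ := norm_le_norm_add_norm_sub' _ _
    _ ≤ ‖A k k‖ + ∑ j ∈ univ.erase k, ‖A k j‖ := by gcongr
    _ = ∑ j, ‖A k j‖ := add_sum_erase _ (fun j => ‖A k j‖) (mem_univ k)

theorem norm_le_sup'_sum_of_mem_spectrum_map_ofReal {ι : Type*} [Fintype ι] [DecidableEq ι]
    (hne : (univ : Finset ι).Nonempty) {M : Matrix ι ι ℝ} (hM : ∀ i j, 0 ≤ M i j) {μ : ℂ}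
    (hμ : μ ∈ spectrum ℂ (M.map Complex.ofReal)) :
    ‖μ‖ ≤ univ.sup' hne fun i => ∑ j, M i j := by
  obtain ⟨k, hk⟩ := exists_norm_le_sum_norm_of_mem_spectrum hμ
  calc ‖μ‖ ≤ ∑ j, M k j := by simpa [abs_of_nonneg (hM _ _)] using hk
    _ ≤ _ := le_sup' (fun i => ∑ j, M i j) (mem_univ k)

end Matrix

theorem stmt_9_general (n : ℕ)
    (hne : (Finset.univ : Finset (Fin n)).Nonempty)
    (F : Matrix (Fin n) (Fin n) ℝ)
    (hFnonneg : ∀ i j, 0 ≤ F i j)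
    (hFrow : ∀ i, ∑ j, F i j = 1)
    (b : Fin n → ℝ) (hb0 : ∀ j, 0 ≤ b j) (hb1 : ∀ j, b j < 1)
    (K : Matrix (Fin n) (Fin n) ℝ)
    (hK : ∀ i j, K i j = F i j * b j)
    (S : Matrix (Fin n) (Fin n) ℝ)
    (hS : S = (1 - K)⁻¹ * F)
    (A R : Matrix (Fin n) (Fin n) ℝ)
    (hA : ∀ i j, A i j = (1 - b i) * S i j * (1 - b j))
    (hR : ∀ i j, R i j = (1 - b i) * S i j * b j)
    (r : ℝ) (hr : r = Finset.univ.sup' hne (fun i => ∑ j, K i j)) :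
    R.mulVec (fun _ => 1) = (A + R).mulVec b ∧
    Finset.univ.sup' hne (fun i => ∑ j, R i j) ≤
      (1 - Finset.univ.inf' hne b) * r / (1 - r) ∧
    (∀ μ : ℂ, μ ∈ spectrum ℂ (R.map Complex.ofReal) →
        ‖μ‖ ≤ (1 - Finset.univ.inf' hne b) * r / (1 - r)) := by
  have hK_nonneg : ∀ i j, 0 ≤ K i j := fun i j => hK i j ▸ mul_nonneg (hFnonneg i j) (hb0 j)
  have hK_row : ∀ i, ∑ j, K i j ≤ r := fun i => hr ▸ le_sup' (fun i => ∑ j, K i j) (mem_univ i)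
  have hr_lt_one : r < 1 := hr ▸ (sup'_lt_iff hne).2 fun i _ =>
    calc ∑ j, K i j = ∑ j, F i j * b j := sum_congr rfl fun j _ => hK i j
      _ ≤ univ.sup' hne b := sum_mul_le_sup'_of_sum_eq_one hne (fun j _ => hFnonneg i j) (hFrow i) b
      _ < 1 := (sup'_lt_iff hne).2 fun j _ => hb1 j
  have hr_nonneg : 0 ≤ r := (sum_nonneg fun j _ => hK_nonneg _ j).trans (hK_row hne.choose)
  have hS_nonneg : ∀ i j, 0 ≤ S i j := fun i j => by
    rw [hS, mul_apply]
    exact sum_nonneg fun k _ =>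
      mul_nonneg (inv_one_sub_apply_nonneg hK_nonneg hK_row hr_lt_one i k) (hFnonneg k j)
  have hSb_le : ∀ i, (S *ᵥ b) i ≤ r / (1 - r) := by
    rw [hS, ← mulVec_mulVec]
    refine inv_one_sub_mulVec_apply_le hK_nonneg hK_row hr_lt_one hr_nonneg fun i => ?_
    simpa [mulVec, dotProduct, hK] using hK_row i
  have hR_row : ∀ i, ∑ j, R i j ≤ (1 - univ.inf' hne b) * r / (1 - r) := fun i =>
    calc ∑ j, R i j = (1 - b i) * (S *ᵥ b) i := by
          simp only [hR, mulVec, dotProduct, mul_sum, mul_assoc]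
      _ ≤ (1 - b i) * (r / (1 - r)) :=
          mul_le_mul_of_nonneg_left (hSb_le i) (sub_nonneg.2 (hb1 i).le)
      _ ≤ (1 - univ.inf' hne b) * (r / (1 - r)) :=
          mul_le_mul_of_nonneg_right (sub_le_sub_left (inf'_le b (mem_univ i)) 1)
            (div_nonneg hr_nonneg (sub_nonneg.2 hr_lt_one.le))
      _ = _ := (mul_div_assoc ..).symm
  have hR_nonneg : ∀ i j, 0 ≤ R i j := fun i j => hR i j ▸
    mul_nonneg (mul_nonneg (sub_nonneg.2 (hb1 i).le) (hS_nonneg i j)) (hb0 j)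
  have hR_row_max := sup'_le hne _ fun i _ => hR_row i
  refine ⟨?_, hR_row_max, fun μ hμ =>
    (norm_le_sup'_sum_of_mem_spectrum_map_ofReal hne hR_nonneg hμ).trans hR_row_max⟩
  ext i
  simp only [mulVec, dotProduct]
  refine sum_congr rfl fun j _ => ?_
  rw [Matrix.add_apply, hA, hR]
  ring

/-- The row sums of `R` satisfy `R.mulVec 1 = (A + R).mulVec b`
(where `1` is the all-ones vector), and with `r := max_i ∑_j K i j` one has
`max_i ∑_j R i j ≤ (1 − min_j b_j) · r / (1 − r)`; consequently every complex
eigenvalue `μ` of `R` satisfies `|μ| ≤ (1 − min_j b_j) · r / (1 − r)`. -/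
theorem stmt_9 (n : ℕ) (hn : 1 ≤ n)
    (hne : (Finset.univ : Finset (Fin n)).Nonempty)
    (F : Matrix (Fin n) (Fin n) ℝ)
    (hFnonneg : ∀ i j, 0 ≤ F i j)
    (hFrow : ∀ i, ∑ j, F i j = 1)
    (b : Fin n → ℝ) (hb0 : ∀ j, 0 ≤ b j) (hb1 : ∀ j, b j < 1)
    (K : Matrix (Fin n) (Fin n) ℝ)
    (hK : ∀ i j, K i j = F i j * b j)
    (hInv : IsUnit (1 - K))
    (S : Matrix (Fin n) (Fin n) ℝ)
    (hS : S = (1 - K)⁻¹ * F)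
    (A R : Matrix (Fin n) (Fin n) ℝ)
    (hA : ∀ i j, A i j = (1 - b i) * S i j * (1 - b j))
    (hR : ∀ i j, R i j = (1 - b i) * S i j * b j)
    (r : ℝ) (hr : r = Finset.univ.sup' hne (fun i => ∑ j, K i j)) :
    R.mulVec (fun _ => 1) = (A + R).mulVec b ∧
    Finset.univ.sup' hne (fun i => ∑ j, R i j) ≤
      (1 - Finset.univ.inf' hne b) * r / (1 - r) ∧
    (∀ μ : ℂ, μ ∈ spectrum ℂ (R.map Complex.ofReal) →
        ‖μ‖ ≤ (1 - Finset.univ.inf' hne b) * r / (1 - r)) :=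
  stmt_9_general n hne F hFnonneg hFrow b hb0 hb1 K hK S hS A R hA hR r hr
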